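/- For every t ∈ {1,…,T}, every coordinate index i ∈ {1,…,n}, and every fixed choice of the other coordinates in [0,1], the function W_t is affine in its i-th coordinate; explicitly, for all x ∈ [0,1], W_t(ω_1,…,ω_{i−1}, x, ω_{i+1},…,ω_n) = (1−x)·W_t(ω_1,…,ω_{i−1}, 0, ω_{i+1},…,ω_n) + x·W_t(ω_1,…,ω_{i−1}, 1, ω_{i+1},…,ω_n). In particular each W_t is a multivariate polynomial of degree at most 1 in each variable. -/
import Mathlib


open Finset

noncomputable section

/-- The one-step belief update for an unobserved channel. -/
def tauF (p01 p11 : ℝ) (w : ℝ) : ℝ := w * p11 + (1 - w) * p01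

/-- The set of admissible actions: subsets of `Fin n` of cardinality `k`. -/
def actions (n k : ℕ) : Finset (Finset (Fin n)) :=
  (Finset.univ : Finset (Fin n)).powersetCard k

lemma actions_nonempty {n k : ℕ} (hk : k ≤ n) : (actions n k).Nonempty := by
  rw [actions, Finset.powersetCard_nonempty, Finset.card_univ, Fintype.card_fin]
  exact hk

/-- Number of `true` entries in a `{0,1}^k` realization. -/
def countTrue {k : ℕ} (l : Fin k → Bool) : ℕ :=
  (Finset.univ.filter fun i => l i = true).card

/-- `q(l; u) = ∏ u_i^{l_i} (1-u_i)^{1-l_i}`. -/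
def qProb {k : ℕ} (u : Fin k → ℝ) (l : Fin k → Bool) : ℝ :=
  ∏ i : Fin k, if l i then u i else 1 - u i

/-- The top `k` coordinates `(ω_{n-k+1}, …, ω_n)` of a length-`n` vector. -/
def topCoords {n k : ℕ} (hk : k ≤ n) (ω : Fin n → ℝ) : Fin k → ℝ :=
  fun i => ω ⟨n - k + i.val, by omega⟩

/-- The vector `v_l`: `k - m` copies of `p01`, then `τ(ω_1),…,τ(ω_{n-k})`,
then `m` copies of `p11`, where `m` is the number of ones in `l`. -/
def vl {n : ℕ} (k : ℕ) (p01 p11 : ℝ) (ω : Fin n → ℝ) (m : ℕ) : Fin n → ℝ :=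
  fun j =>
    if j.val < k - m then p01
    else if j.val < n - m then tauF p01 p11 (ω ⟨j.val - (k - m), by omega⟩)
    else p11

/-- The greedy-policy value functions `W`, indexed by the number of remaining
steps (`r = 0` corresponds to the terminal time `T`). -/
def Wval (n k : ℕ) (hk : k ≤ n) (p01 p11 β : ℝ) : ℕ → (Fin n → ℝ) → ℝ
  | 0, ω => ∑ i : Fin n, if n - k ≤ i.val then ω i else 0
  | r + 1, ω =>
      (∑ i : Fin n, if n - k ≤ i.val then ω i else 0) +
        β * ∑ l : Fin k → Bool,
          qProb (topCoords hk ω) l *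
            Wval n k hk p01 p11 β r (vl k p01 p11 ω (countTrue l))

/-- The updated information state `ω^{a,s}`. -/
def nextState {n : ℕ} (p01 p11 : ℝ) (ω : Fin n → ℝ) (a : Finset (Fin n))
    (s : {i // i ∈ a} → Bool) : Fin n → ℝ :=
  fun j => if h : j ∈ a then (if s ⟨j, h⟩ then p11 else p01) else tauF p01 p11 (ω j)

/-- The probability of the realization `s` of the selected channels `a`. -/
def obsProb {n : ℕ} (ω : Fin n → ℝ) (a : Finset (Fin n))
    (s : {i // i ∈ a} → Bool) : ℝ :=
  ∏ i : {i // i ∈ a}, if s i then ω i.val else 1 - ω i.val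

/-- The optimal value functions `V`, indexed by the number of remaining steps. -/
def Vval (n k : ℕ) (hk : k ≤ n) (p01 p11 β : ℝ) : ℕ → (Fin n → ℝ) → ℝ
  | 0, ω => (actions n k).sup' (actions_nonempty hk) fun a => ∑ i ∈ a, ω i
  | r + 1, ω =>
      (actions n k).sup' (actions_nonempty hk) fun a =>
        (∑ i ∈ a, ω i) +
          β * ∑ s : {i // i ∈ a} → Bool,
            obsProb ω a s * Vval n k hk p01 p11 β r (nextState p01 p11 ω a s)

/-- `Q_t(ω, a)`: the value of taking action `a` now and acting optimally
afterwards, indexed by the number of remaining steps. -/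
def Qval (n k : ℕ) (hk : k ≤ n) (p01 p11 β : ℝ) : ℕ → (Fin n → ℝ) → Finset (Fin n) → ℝ
  | 0, ω, a => ∑ i ∈ a, ω i
  | r + 1, ω, a =>
      (∑ i ∈ a, ω i) +
        β * ∑ s : {i // i ∈ a} → Bool,
          obsProb ω a s * Vval n k hk p01 p11 β r (nextState p01 p11 ω a s)

/-- Replace the coordinates in positions `j` and `j+1` (`0`-indexed) by `x` and `y`. -/
def upd2 {n : ℕ} (ω : Fin n → ℝ) (j : ℕ) (hj : j + 1 < n) (x y : ℝ) : Fin n → ℝ :=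
  Function.update (Function.update ω ⟨j, by omega⟩ x) ⟨j + 1, hj⟩ y

/-- The cyclic shift `(ω_2, …, ω_n, ω_1)`. -/
def cyc {n : ℕ} (hn : 0 < n) (ω : Fin n → ℝ) : Fin n → ℝ :=
  fun j => ω ⟨(j.val + 1) % n, Nat.mod_lt _ hn⟩

end

section Aux

lemma countTrue_le {k : ℕ} (l : Fin k → Bool) : countTrue l ≤ k := by
  classical
  simpa [countTrue] using
    (Finset.card_filter_le (Finset.univ : Finset (Fin k)) fun i => l i = true)

lemma sum_top_update {n k : ℕ} (ω : Fin n → ℝ) (i : Fin n) (y : ℝ) :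
    (∑ j : Fin n, if n - k ≤ j.val then Function.update ω i y j else 0) =
      (∑ j ∈ Finset.univ.erase i, if n - k ≤ j.val then ω j else 0) +
        (if n - k ≤ i.val then y else 0) := by
  rw [← Finset.add_sum_erase _ _ (Finset.mem_univ i), Function.update_self, add_comm]
  congr 1
  refine Finset.sum_congr rfl fun j hj => ?_
  rw [Function.update_of_ne (Finset.ne_of_mem_erase hj)]

lemma qProb_update {k : ℕ} (u : Fin k → ℝ) (j0 : Fin k) (l : Fin k → Bool) (y : ℝ) :
    qProb (Function.update u j0 y) l =
      (1 - y) * qProb (Function.update u j0 0) l +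
        y * qProb (Function.update u j0 1) l := by
  have key : ∀ z : ℝ, qProb (Function.update u j0 z) l =
      (if l j0 then z else 1 - z) *
        ∏ j ∈ Finset.univ.erase j0, (if l j then u j else 1 - u j) := by
    intro z
    rw [qProb, ← Finset.mul_prod_erase _ _ (Finset.mem_univ j0), Function.update_self]
    congr 1
    refine Finset.prod_congr rfl fun j hj => ?_
    rw [Function.update_of_ne (Finset.ne_of_mem_erase hj)]
  rw [key, key, key]
  cases hl : l j0 <;> simp [hl] <;> ring

lemma Wval_affine (n k : ℕ) (hkn : k ≤ n) (p01 p11 β : ℝ) :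
    ∀ (r : ℕ) (i : Fin n) (ω : Fin n → ℝ) (x : ℝ),
      Wval n k hkn p01 p11 β r (Function.update ω i x) =
        (1 - x) * Wval n k hkn p01 p11 β r (Function.update ω i 0) +
          x * Wval n k hkn p01 p11 β r (Function.update ω i 1) := by
  intro r
  induction r with
  | zero =>
    intro i ω x
    simp only [Wval, sum_top_update]
    split <;> ring
  | succ r ih =>
    intro i ω x
    simp only [Wval]
    by_cases h : i.val < n - k
    · -- low coordinate
      have hlt : ∀ l : Fin k → Bool, k - countTrue l + i.val < n := fun l => by
        have := countTrue_le l; omega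
      have htop : ∀ y : ℝ,
          topCoords hkn (Function.update ω i y) = topCoords hkn ω := by
        intro y
        funext j
        simp only [topCoords, Function.update_apply, Fin.ext_iff]
        rw [if_neg (by omega)]
      have hvl : ∀ (y : ℝ) (l : Fin k → Bool),
          vl k p01 p11 (Function.update ω i y) (countTrue l) =
            Function.update (vl (n := n) k p01 p11 ω (countTrue l))
              ⟨k - countTrue l + i.val, hlt l⟩ (tauF p01 p11 y) := by
        intro y l
        have hml := countTrue_le l
        funext j
        simp only [vl, Function.update_apply, Fin.ext_iff, tauF]
        split_ifs <;> first | rfl | omega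
      have hS : ∀ y : ℝ,
          (∑ j : Fin n, if n - k ≤ j.val then Function.update ω i y j else 0) =
            ∑ j ∈ Finset.univ.erase i, if n - k ≤ j.val then ω j else 0 := fun y => by
        rw [sum_top_update, if_neg (by omega), add_zero]
      have hQ : ∀ y : ℝ,
          (∑ l : Fin k → Bool,
              qProb (topCoords hkn (Function.update ω i y)) l *
                Wval n k hkn p01 p11 β r
                  (vl k p01 p11 (Function.update ω i y) (countTrue l))) =
            (1 - tauF p01 p11 y) *
                (∑ l : Fin k → Bool,
                  qProb (topCoords hkn ω) l *
                    Wval n k hkn p01 p11 β r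
                      (Function.update (vl k p01 p11 ω (countTrue l))
                        ⟨k - countTrue l + i.val, hlt l⟩ 0)) +
              tauF p01 p11 y *
                (∑ l : Fin k → Bool,
                  qProb (topCoords hkn ω) l *
                    Wval n k hkn p01 p11 β r
                      (Function.update (vl k p01 p11 ω (countTrue l))
                        ⟨k - countTrue l + i.val, hlt l⟩ 1)) := by
        intro y
        rw [Finset.mul_sum, Finset.mul_sum, ← Finset.sum_add_distrib]
        refine Finset.sum_congr rfl fun l _ => ?_
        rw [htop y, hvl y l, ih]
        ring
      rw [hQ x, hQ 0, hQ 1, hS x, hS 0, hS 1]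
      simp only [tauF]
      ring
    · -- top coordinate
      push_neg at h
      have hj0 : i.val - (n - k) < k := by have := i.isLt; omega
      have htop : ∀ y : ℝ,
          topCoords hkn (Function.update ω i y) =
            Function.update (topCoords hkn ω) ⟨i.val - (n - k), hj0⟩ y := by
        intro y
        funext j
        have hjk := j.isLt
        simp only [topCoords, Function.update_apply, Fin.ext_iff]
        split_ifs <;> first | rfl | omega
      have hvl : ∀ (y : ℝ) (m : ℕ),
          vl (n := n) k p01 p11 (Function.update ω i y) m = vl k p01 p11 ω m := by
        intro y m
        funext j
        have hjn := j.isLt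
        simp only [vl, Function.update_apply, Fin.ext_iff, tauF]
        split_ifs <;> first | rfl | omega
      have hS : ∀ y : ℝ,
          (∑ j : Fin n, if n - k ≤ j.val then Function.update ω i y j else 0) =
            (∑ j ∈ Finset.univ.erase i, if n - k ≤ j.val then ω j else 0) + y := fun y => by
        rw [sum_top_update, if_pos h]
      have hQ : ∀ y : ℝ,
          (∑ l : Fin k → Bool,
              qProb (topCoords hkn (Function.update ω i y)) l *
                Wval n k hkn p01 p11 β r
                  (vl k p01 p11 (Function.update ω i y) (countTrue l))) =
            (1 - y) *
                (∑ l : Fin k → Bool,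
                  qProb (Function.update (topCoords hkn ω) ⟨i.val - (n - k), hj0⟩ 0) l *
                    Wval n k hkn p01 p11 β r (vl k p01 p11 ω (countTrue l))) +
              y *
                (∑ l : Fin k → Bool,
                  qProb (Function.update (topCoords hkn ω) ⟨i.val - (n - k), hj0⟩ 1) l *
                    Wval n k hkn p01 p11 β r (vl k p01 p11 ω (countTrue l))) := by
        intro y
        rw [Finset.mul_sum, Finset.mul_sum, ← Finset.sum_add_distrib]
        refine Finset.sum_congr rfl fun l _ => ?_
        rw [htop y, hvl y, qProb_update]
        ring
      rw [hQ x, hQ 0, hQ 1, hS x, hS 0, hS 1]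
      ring

end Aux

/-- For every `t ∈ {1,…,T}`, every coordinate `i`, every fixed
choice of the other coordinates in `[0,1]`, and every `x ∈ [0,1]`, `W_t` is
affine in its `i`-th coordinate:
`W_t(ω[i ↦ x]) = (1 - x)·W_t(ω[i ↦ 0]) + x·W_t(ω[i ↦ 1])`. -/
theorem W_affine_in_each_coordinate
    (n k T : ℕ) (hk1 : 1 ≤ k) (hkn : k ≤ n) (hT : 1 ≤ T)
    (p01 p11 β : ℝ)
    (hp01 : p01 ∈ Set.Icc (0:ℝ) 1) (hp11 : p11 ∈ Set.Icc (0:ℝ) 1)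
    (hβ : β ∈ Set.Icc (0:ℝ) 1)
    (t : ℕ) (ht1 : 1 ≤ t) (ht2 : t ≤ T)
    (i : Fin n) (ω : Fin n → ℝ) (hω : ∀ j, j ≠ i → ω j ∈ Set.Icc (0:ℝ) 1)
    (x : ℝ) (hx : x ∈ Set.Icc (0:ℝ) 1) :
    Wval n k hkn p01 p11 β (T - t) (Function.update ω i x) =
      (1 - x) * Wval n k hkn p01 p11 β (T - t) (Function.update ω i 0) +
        x * Wval n k hkn p01 p11 β (T - t) (Function.update ω i 1) := by
  exact Wval_affine n k hkn p01 p11 β (T - t) i ω x
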